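/- arXiv:1006.1596 — 5 statements merged into one kernel-verified Lean document; each statement's English description precedes it below -/
import Mathlib

section
/- Let (Y_n)_{n≥-2} be i.i.d. uniform on [0,1] and X_{n,1} = max{Y_n, Y_{n-2}, Y_{n-3}}. For u_n = 1 - τ'/n with τ' > 0, the limit of n·P(X_{1,1} ≤ u_n < X_{2,1}) as n → ∞ equals 2τ'. (The upcrossing rate of the level u_n for X_{·,1} is 2τ'.) -/
/-! With `c = u n`, the upcrossing event is `{Y 1, Y (-1), Y (-2) ≤ c}` minus
`{Y 1, Y (-1), Y (-2), Y 2, Y 0 ≤ c}`, so by independence its probability is `c ^ 3 - c ^ 5`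
once `c ∈ [0, 1]`. Since `1 - c = τ' / n`, `n (c ^ 3 - c ^ 5) = τ' c ^ 3 (1 + c) → 2 τ'`. -/

open MeasureTheory ProbabilityTheory Filter Set Topology

section UniformMarginals

variable {Ω ι : Type*} [MeasurableSpace Ω] {P : Measure Ω}

lemma measureReal_preimage_Iic_of_map_eq_uniform {Z : Ω → ℝ}
    (hZ : P.map Z = volume.restrict (Icc 0 1)) {t : ℝ} (ht : t ∈ Icc 0 1) :
    P.real (Z ⁻¹' Iic t) = t := by
  have hZm : AEMeasurable Z P := .of_map_ne_zero (by simp [hZ])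
  rw [measureReal_def, ← Measure.map_apply_of_aemeasurable hZm measurableSet_Iic, hZ,
    Measure.restrict_apply measurableSet_Iic, inter_comm, ← Ici_inter_Iic, inter_assoc,
    Iic_inter_Iic, min_eq_right ht.2, Ici_inter_Iic, Real.volume_Icc,
    sub_zero, ENNReal.toReal_ofReal ht.1]

variable {Y : ι → Ω → ℝ} {t : ℝ}

namespace ProbabilityTheory

lemma iIndepFun.measureReal_biInter_preimage_Iic (hY : iIndepFun Y P)
    (hU : ∀ i, P.map (Y i) = volume.restrict (Icc 0 1)) (S : Finset ι) (ht : t ∈ Icc 0 1) :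
    P.real (⋂ i ∈ S, Y i ⁻¹' Iic t) = t ^ S.card := by
  rw [measureReal_def, hY.meas_biInter fun i _ ↦ ⟨Iic t, measurableSet_Iic, rfl⟩,
    ENNReal.toReal_prod]
  simp_rw [← measureReal_def, measureReal_preimage_Iic_of_map_eq_uniform (hU _) ht,
    Finset.prod_const]

lemma iIndepFun.measureReal_biInter_sdiff_biInter_preimage_Iic [IsFiniteMeasure P]
    (hY : iIndepFun Y P) (hU : ∀ i, P.map (Y i) = volume.restrict (Icc 0 1))
    {S T : Finset ι} (hST : S ⊆ T) (ht : t ∈ Icc 0 1) :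
    P.real ((⋂ i ∈ S, Y i ⁻¹' Iic t) \ ⋂ i ∈ T, Y i ⁻¹' Iic t) = t ^ S.card - t ^ T.card := by
  have hsub : ⋂ i ∈ T, Y i ⁻¹' Iic t ⊆ ⋂ i ∈ S, Y i ⁻¹' Iic t := biInter_subset_biInter_left hST
  have hnull : NullMeasurableSet (⋂ i ∈ T, Y i ⁻¹' Iic t) P :=
    T.nullMeasurableSet_biInter fun i _ ↦
      (AEMeasurable.of_map_ne_zero (by simp [hU i])).nullMeasurable measurableSet_Iic
  rw [measureReal_def, measure_sdiff hsub hnull (measure_ne_top _ _),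
    ENNReal.toReal_sub_of_le (measure_mono hsub) (measure_ne_top _ _), ← measureReal_def,
    ← measureReal_def, hY.measureReal_biInter_preimage_Iic hU S ht,
    hY.measureReal_biInter_preimage_Iic hU T ht]

end ProbabilityTheory

end UniformMarginals

lemma tendsto_natCast_mul_pow_three_sub_pow_five (τ : ℝ) :
    Tendsto (fun n : ℕ ↦ n * ((1 - τ / n) ^ 3 - (1 - τ / n) ^ 5)) atTop (𝓝 (2 * τ)) := by
  have hc : Tendsto (fun n : ℕ ↦ 1 - τ / n) atTop (𝓝 1) := by
    simpa using tendsto_const_nhds.sub (tendsto_const_div_atTop_nhds_zero_nat τ)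
  have hlim : Tendsto (fun n : ℕ ↦ τ * (1 - τ / n) ^ 3 * (1 + (1 - τ / n))) atTop
      (𝓝 (2 * τ)) := by
    convert (tendsto_const_nhds.mul (hc.pow 3)).mul (tendsto_const_nhds.add hc) using 2
    ring
  -- `c ^ 3 - c ^ 5 = c ^ 3 (1 - c) (1 + c)` and `n (1 - c) = τ`
  refine hlim.congr' ?_
  filter_upwards [eventually_ne_atTop 0] with n hn
  field_simp
  ring

theorem stmt1_general
    {Ω : Type*} [MeasurableSpace Ω] (P : Measure Ω) [IsProbabilityMeasure P]
    (Y : ℤ → Ω → ℝ)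
    (hIndep : iIndepFun Y P)
    (hUnif : ∀ i, Measure.map (Y i) P = volume.restrict (Icc (0:ℝ) 1))
    (τ' : ℝ) (hτ : 0 < τ')
    (X : ℕ → Ω → ℝ)
    (hX : ∀ i : ℕ, X i = fun ω => max (Y i ω) (max (Y ((i:ℤ) - 2) ω) (Y ((i:ℤ) - 3) ω)))
    (u : ℕ → ℝ) (hu : ∀ n : ℕ, u n = 1 - τ' / n) :
    Tendsto (fun n : ℕ => (n : ℝ) * (P {ω | X 1 ω ≤ u n ∧ u n < X 2 ω}).toReal)
      atTop (nhds (2 * τ')) := by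
  have hupcross : ∀ c, {ω | X 1 ω ≤ c ∧ c < X 2 ω} =
      (⋂ i ∈ ({1, -1, -2} : Finset ℤ), Y i ⁻¹' Iic c) \
        ⋂ i ∈ ({1, -1, -2, 2, 0} : Finset ℤ), Y i ⁻¹' Iic c := by
    intro c
    ext ω
    simp only [hX, mem_ofPred_eq, Set.mem_sdiff, Finset.set_biInter_insert,
      Finset.set_biInter_singleton, mem_inter_iff, mem_preimage, mem_Iic]
    norm_num
    grind
  have hu01 : ∀ᶠ n : ℕ in atTop, u n ∈ Icc (0 : ℝ) 1 := by
    filter_upwards [eventually_ge_atTop ⌈τ'⌉₊, eventually_gt_atTop 0] with n hn hn0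
    have hn0' : (0 : ℝ) < n := by exact_mod_cast hn0
    rw [hu, mem_Icc, sub_nonneg, div_le_one hn0', sub_le_self_iff]
    exact ⟨Nat.ceil_le.1 hn, by positivity⟩
  refine (tendsto_natCast_mul_pow_three_sub_pow_five τ').congr' ?_
  filter_upwards [hu01] with n hn
  rw [← measureReal_def, hupcross, hIndep.measureReal_biInter_sdiff_biInter_preimage_Iic hUnif
    (by decide) hn, hu]
  rfl

theorem stmt1
    {Ω : Type*} [MeasurableSpace Ω] (P : Measure Ω) [IsProbabilityMeasure P]
    (Y : ℤ → Ω → ℝ) (hYm : ∀ i, Measurable (Y i))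
    (hIndep : iIndepFun Y P)
    (hUnif : ∀ i, Measure.map (Y i) P = volume.restrict (Icc (0:ℝ) 1))
    (τ' : ℝ) (hτ : 0 < τ')
    (X : ℕ → Ω → ℝ)
    (hX : ∀ i : ℕ, X i = fun ω => max (Y i ω) (max (Y ((i:ℤ) - 2) ω) (Y ((i:ℤ) - 3) ω)))
    (u : ℕ → ℝ) (hu : ∀ n : ℕ, u n = 1 - τ' / n) :
    Tendsto (fun n : ℕ => (n : ℝ) * (P {ω | X 1 ω ≤ u n ∧ u n < X 2 ω}).toReal)
      atTop (nhds (2 * τ')) :=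
  stmt1_general P Y hIndep hUnif τ' hτ X hX u hu
end

section
/- Let (Y_n)_{n≥-2} be i.i.d. uniform on [0,1], and define Z_{n,1} = max{Y_n, Y_{n-2}, Y_{n-3}} and Z_{n,2} = Y_n. For u_{n,1} = 1 - τ'_1/n and u_{n,2} = 1 - τ'_2/n with τ'_1, τ'_2 > 0, the limit as n → ∞ of n·P(Z_{1,1} ≤ u_{n,1} < Z_{2,1}, Z_{1,2} ≤ u_{n,2} < Z_{2,2}) equals min{τ'_1, τ'_2} > 0. -/
/-!
Write `a = u₁`, `b = u₂`. With `Y₋₂, Y₋₁ ≤ a` and `Y₁ ≤ min a b` forced, the joint upcrossing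
happens exactly when either `Y₂ > max a b`, or `Y₂ ∈ (b, a]` and `Y₀ > a`. These are two disjoint
rectangles in `(Y₋₂, …, Y₂)`, so independence and uniformity give the exact probability
`a² min(a, b) ((1 - max(a, b)) + (1 - a)(a - b)⁺)`. Here `n (1 - max(a, b)) = min(τ₁, τ₂)`, while the
second summand is `O(1/n²)`.
-/

open MeasureTheory ProbabilityTheory Filter Set Topology

lemma volume_real_Iic_inter_Icc_zero_one {a : ℝ} (h₀ : 0 ≤ a) (h₁ : a ≤ 1) :
    volume.real (Iic a ∩ Icc 0 1) = a := by
  rw [inter_comm, ← Ici_inter_Iic, inter_assoc, Iic_inter_Iic, min_eq_right h₁, Ici_inter_Iic,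
    Real.volume_real_Icc_of_le h₀, sub_zero]

lemma volume_real_Ioi_inter_Icc_zero_one {a : ℝ} (h₀ : 0 ≤ a) (h₁ : a ≤ 1) :
    volume.real (Ioi a ∩ Icc 0 1) = 1 - a := by
  rw [← Ici_inter_Iic, ← inter_assoc, inter_eq_left.mpr (Ioi_subset_Ici h₀), Ioi_inter_Iic,
    Real.volume_real_Ioc_of_le h₁]

lemma volume_real_Ioc_inter_Icc_zero_one {a b : ℝ} (h₀ : 0 ≤ a) (h₁ : b ≤ 1) :
    volume.real (Ioc a b ∩ Icc 0 1) = max (b - a) 0 := by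
  rw [inter_eq_left.mpr (Ioc_subset_Icc_self.trans (Icc_subset_Icc h₀ h₁)), Real.volume_real_Ioc]

lemma upcrossing_event_eq_union {Ω : Type*} (Y : ℤ → Ω → ℝ) (a b : ℝ) :
    {ω | (max (Y 1 ω) (max (Y (-1) ω) (Y (-2) ω)) ≤ a ∧
        a < max (Y 2 ω) (max (Y 0 ω) (Y (-1) ω))) ∧ (Y 1 ω ≤ b ∧ b < Y 2 ω)} =
      (⋂ j, Y (![-2, -1, 1, 2] j) ⁻¹' ![Iic a, Iic a, Iic (min a b), Ioi (max a b)] j) ∪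
      (⋂ j, Y (![-2, -1, 0, 1, 2] j) ⁻¹' ![Iic a, Iic a, Ioi a, Iic (min a b), Ioc b a] j) := by
  ext ω
  simp only [sup_le_iff, lt_sup_iff, mem_ofPred_eq, mem_union, mem_iInter, mem_preimage,
    Fin.forall_fin_succ, Matrix.cons_val_zero, Matrix.cons_val_succ, Matrix.cons_val_fin_one,
    mem_Iic, mem_Ioi, mem_Ioc, le_inf_iff, sup_lt_iff, forall_const]
  grind

section UniformLaw

variable {Ω : Type*} [MeasurableSpace Ω] {P : Measure Ω}

lemma measureReal_preimage_of_map_eq_uniform {X : Ω → ℝ} (hX : Measurable X)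
    (hunif : P.map X = volume.restrict (Icc 0 1)) {s : Set ℝ} (hs : MeasurableSet s) :
    P.real (X ⁻¹' s) = volume.real (s ∩ Icc 0 1) := by
  rw [← map_measureReal_apply hX hs, hunif, measureReal_restrict_apply hs]

lemma measureReal_iInter_preimage_of_uniform {ι : Type*} {Y : ι → Ω → ℝ}
    (hYm : ∀ i, Measurable (Y i)) (hIndep : iIndepFun Y P)
    (hunif : ∀ i, P.map (Y i) = volume.restrict (Icc 0 1)) {m : ℕ} {k : Fin m → ι}
    (hk : k.Injective) {s : Fin m → Set ℝ} (hs : ∀ j, MeasurableSet (s j)) :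
    P.real (⋂ j, Y (k j) ⁻¹' s j) = ∏ j, volume.real (s j ∩ Icc 0 1) := by
  have hprod := (hIndep.precomp hk).measure_inter_preimage_eq_mul Finset.univ (sets := s)
    fun j _ => hs j
  simp only [Finset.mem_univ, iInter_true] at hprod
  rw [measureReal_def, hprod, ENNReal.toReal_prod]
  refine Finset.prod_congr rfl fun j _ => ?_
  rw [← measureReal_def, measureReal_preimage_of_map_eq_uniform (hYm _) (hunif _) (hs j)]

def jointUpcrossingProb (a b : ℝ) : ℝ :=
  a ^ 2 * min a b * (1 - max a b + (1 - a) * max (a - b) 0)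

lemma measureReal_upcrossing_event [IsFiniteMeasure P] {Y : ℤ → Ω → ℝ}
    (hYm : ∀ i, Measurable (Y i)) (hIndep : iIndepFun Y P)
    (hunif : ∀ i, P.map (Y i) = volume.restrict (Icc 0 1)) {a b : ℝ}
    (ha : a ∈ Icc (0 : ℝ) 1) (hb : b ∈ Icc (0 : ℝ) 1) :
    P.real {ω | (max (Y 1 ω) (max (Y (-1) ω) (Y (-2) ω)) ≤ a ∧
        a < max (Y 2 ω) (max (Y 0 ω) (Y (-1) ω))) ∧ (Y 1 ω ≤ b ∧ b < Y 2 ω)} =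
      jointUpcrossingProb a b := by
  have hdisj : Disjoint
      (⋂ j, Y (![-2, -1, 1, 2] j) ⁻¹' ![Iic a, Iic a, Iic (min a b), Ioi (max a b)] j)
      (⋂ j, Y (![-2, -1, 0, 1, 2] j) ⁻¹' ![Iic a, Iic a, Ioi a, Iic (min a b), Ioc b a] j) := by
    refine disjoint_left.mpr fun ω hA hB => ?_
    have hY₂_gt : max a b < Y 2 ω := mem_iInter.mp hA 3
    have hY₂_le : Y 2 ω ≤ a := (mem_iInter.mp hB 4).2
    exact (le_max_left a b).not_gt (hY₂_gt.trans_le hY₂_le)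
  have hmeas : ∀ {m : ℕ} (k : Fin m → ℤ) (s : Fin m → Set ℝ), (∀ j, MeasurableSet (s j)) →
      MeasurableSet (⋂ j, Y (k j) ⁻¹' s j) :=
    fun k s hs => MeasurableSet.iInter fun j => hYm (k j) (hs j)
  rw [upcrossing_event_eq_union, measureReal_union hdisj (hmeas _ _ ?_),
    measureReal_iInter_preimage_of_uniform hYm hIndep hunif (by decide) ?_,
    measureReal_iInter_preimage_of_uniform hYm hIndep hunif (by decide) ?_]
  · simp only [Fin.prod_univ_four, Fin.prod_univ_five, Matrix.cons_val]
    rw [volume_real_Iic_inter_Icc_zero_one ha.1 ha.2,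
      volume_real_Iic_inter_Icc_zero_one (le_min ha.1 hb.1) (min_le_of_left_le ha.2),
      volume_real_Ioi_inter_Icc_zero_one ha.1 ha.2,
      volume_real_Ioi_inter_Icc_zero_one (le_max_of_le_left ha.1) (max_le ha.2 hb.2),
      volume_real_Ioc_inter_Icc_zero_one hb.1 ha.2, jointUpcrossingProb]
    ring
  all_goals simp [Fin.forall_fin_succ, measurableSet_Iic, measurableSet_Ioi, measurableSet_Ioc]

end UniformLaw

lemma eventually_one_sub_div_mem_Icc {τ : ℝ} (hτ : 0 ≤ τ) :
    ∀ᶠ n : ℕ in atTop, 1 - τ / n ∈ Icc (0 : ℝ) 1 := by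
  filter_upwards [(tendsto_const_div_atTop_nhds_zero_nat τ).eventually (Iic_mem_nhds one_pos)]
    with n hn
  exact ⟨sub_nonneg.mpr hn, sub_le_self _ (by positivity)⟩

lemma tendsto_mul_jointUpcrossingProb (τ₁ τ₂ : ℝ) :
    Tendsto (fun n : ℕ => (n : ℝ) * jointUpcrossingProb (1 - τ₁ / n) (1 - τ₂ / n)) atTop
      (𝓝 (min τ₁ τ₂)) := by
  have hlim : Tendsto (fun n : ℕ => (1 - τ₁ / n) ^ 2 * min (1 - τ₁ / n) (1 - τ₂ / n) *
      (min τ₁ τ₂ + τ₁ * max (τ₂ - τ₁) 0 / n)) atTop (𝓝 (min τ₁ τ₂)) := by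
    have h₁ := (tendsto_const_div_atTop_nhds_zero_nat τ₁).const_sub 1
    have h₂ := (tendsto_const_div_atTop_nhds_zero_nat τ₂).const_sub 1
    simpa using ((h₁.pow 2).mul (h₁.min h₂)).mul
      ((tendsto_const_div_atTop_nhds_zero_nat (τ₁ * max (τ₂ - τ₁) 0)).const_add (min τ₁ τ₂))
  refine hlim.congr' ?_
  filter_upwards [eventually_gt_atTop 0] with n hn
  have hn : (0 : ℝ) < n := by exact_mod_cast hn
  have hmax : 1 - max (1 - τ₁ / n) (1 - τ₂ / n) = min τ₁ τ₂ / n := by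
    rw [max_sub_sub_left, sub_sub_cancel, min_div_div_right hn.le]
  have hdiff : max (1 - τ₁ / n - (1 - τ₂ / n)) 0 = max (τ₂ - τ₁) 0 / n := by
    rw [← max_div_div_right hn.le, zero_div, sub_sub_sub_cancel_left, div_sub_div_same]
  rw [jointUpcrossingProb, hmax, hdiff, sub_sub_cancel]
  field_simp

theorem stmt3
    {Ω : Type*} [MeasurableSpace Ω] (P : Measure Ω) [IsProbabilityMeasure P]
    (Y : ℤ → Ω → ℝ) (hYm : ∀ i, Measurable (Y i))
    (hIndep : iIndepFun Y P)
    (hUnif : ∀ i, Measure.map (Y i) P = volume.restrict (Icc (0:ℝ) 1))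
    (τ'₁ τ'₂ : ℝ) (hτ₁ : 0 < τ'₁) (hτ₂ : 0 < τ'₂)
    (Z₁ Z₂ : ℕ → Ω → ℝ)
    (hZ₁ : ∀ i : ℕ, Z₁ i = fun ω => max (Y i ω) (max (Y ((i:ℤ) - 2) ω) (Y ((i:ℤ) - 3) ω)))
    (hZ₂ : ∀ i : ℕ, Z₂ i = fun ω => Y i ω)
    (u₁ u₂ : ℕ → ℝ) (hu₁ : ∀ n : ℕ, u₁ n = 1 - τ'₁ / n) (hu₂ : ∀ n : ℕ, u₂ n = 1 - τ'₂ / n) :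
    Tendsto (fun n : ℕ => (n : ℝ) *
        (P {ω | (Z₁ 1 ω ≤ u₁ n ∧ u₁ n < Z₁ 2 ω) ∧ (Z₂ 1 ω ≤ u₂ n ∧ u₂ n < Z₂ 2 ω)}).toReal)
      atTop (nhds (min τ'₁ τ'₂)) ∧ 0 < min τ'₁ τ'₂ := by
  have hZ₁_one : Z₁ 1 = fun ω => max (Y 1 ω) (max (Y (-1) ω) (Y (-2) ω)) := by
    rw [hZ₁]; norm_num
  have hZ₁_two : Z₁ 2 = fun ω => max (Y 2 ω) (max (Y 0 ω) (Y (-1) ω)) := by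
    rw [hZ₁]; norm_num
  refine ⟨(tendsto_mul_jointUpcrossingProb τ'₁ τ'₂).congr' ?_, lt_min hτ₁ hτ₂⟩
  filter_upwards [eventually_one_sub_div_mem_Icc hτ₁.le, eventually_one_sub_div_mem_Icc hτ₂.le]
    with n h₁ h₂
  rw [hu₁, hu₂, hZ₁_one, hZ₁_two, hZ₂, hZ₂, ← measureReal_def]
  exact congrArg _ (measureReal_upcrossing_event hYm hIndep hUnif h₁ h₂).symm
end

section
/- Let (Y_n)_{n≥-2} be i.i.d. uniform on [0,1], Z_{n,1} = max{Y_n, Y_{n-2}, Y_{n-3}}, Z_{n,2} = Y_n, and A_n = {Z_{1,1} ≤ u_{n,1} < Z_{2,1}} ∪ {Z_{1,2} ≤ u_{n,2} < Z_{2,2}} with u_{n,j} = 1 - τ'_j/n, τ'_j > 0. Then n·P(A_n) converges as n → ∞ to 2τ'_1 + τ'_2 - min{τ'_1, τ'_2}, i.e., to τ'_1 + τ'_2 if τ'_2 ≥ τ'_1 and to 2τ'_1 if τ'_2 < τ'_1. -/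
/-!
Both events only involve `Y (-2), …, Y 2`, and `Y (-1)` occurs in both maxima, so the first
upcrossing is `{Y (-2), Y (-1), Y 1 ≤ a} ∩ {max (Y 0) (Y 2) > a}`. Splitting according to whether
`Y 2` exceeds the levels, the first event and its intersection with the second are disjoint unions
of boxes in `(Y (-2), …, Y 2)`, whose probabilities are products of interval lengths. This gives
`P(A_n)` exactly for `a = u₁ n`, `b = u₂ n`; every term carries a factor `1 - a = τ'₁ / n`,
`1 - b = τ'₂ / n` or `1 - max a b = min τ'₁ τ'₂ / n`, so `n * P(A_n)` is a continuous function
of `(a, b)`, evaluated along `(a, b) → (1, 1)`.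
-/

open MeasureTheory ProbabilityTheory Filter Set Topology

noncomputable abbrev unitUniform : Measure ℝ := volume.restrict (Icc 0 1)

lemma unitUniform_real_Iic {t : ℝ} (ht : t ∈ Icc (0:ℝ) 1) : unitUniform.real (Iic t) = t := by
  have : Iic t ∩ Icc 0 1 = Icc 0 t := by
    ext; simp only [mem_inter_iff, mem_Iic, mem_Icc]; grind
  rw [measureReal_restrict_apply measurableSet_Iic, this, Real.volume_real_Icc_of_le ht.1,
    sub_zero]

lemma unitUniform_real_Ioi {t : ℝ} (ht : t ∈ Icc (0:ℝ) 1) :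
    unitUniform.real (Ioi t) = 1 - t := by
  have : Ioi t ∩ Icc 0 1 = Ioc t 1 := by
    ext; simp only [mem_inter_iff, mem_Ioi, mem_Icc, mem_Ioc]; grind
  rw [measureReal_restrict_apply measurableSet_Ioi, this, Real.volume_real_Ioc_of_le ht.2]

lemma unitUniform_real_Ioc {s t : ℝ} (hs : 0 ≤ s) (ht : t ≤ 1) :
    unitUniform.real (Ioc s t) = max (t - s) 0 := by
  rw [measureReal_restrict_apply measurableSet_Ioc,
    inter_eq_left.2 (Ioc_subset_Icc_self.trans (Icc_subset_Icc hs ht)), Real.volume_real_Ioc]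

lemma unitUniform_real_univ : unitUniform.real univ = 1 := by simp

noncomputable def upcrossingProb (a b : ℝ) : ℝ :=
  a ^ 3 * (1 - a) * (1 + a) + b * (1 - b) -
    (a ^ 2 * min a b * (1 - max a b) + a ^ 2 * (1 - a) * min a b * max (a - b) 0)

lemma tendsto_mul_upcrossingProb (τ₁ τ₂ : ℝ) :
    Tendsto (fun n : ℕ => n * upcrossingProb (1 - τ₁ / n) (1 - τ₂ / n)) atTop
      (𝓝 (2 * τ₁ + τ₂ - min τ₁ τ₂)) := by
  -- `n * upcrossingProb a b = F (a, b)` once `n` is absorbed by the factors `1 - ·` (see `hgap`)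
  set F : ℝ × ℝ → ℝ := fun p => τ₁ * p.1 ^ 3 * (1 + p.1) + τ₂ * p.2 -
    (min τ₁ τ₂ * p.1 ^ 2 * min p.1 p.2 + τ₁ * p.1 ^ 2 * min p.1 p.2 * max (p.1 - p.2) 0)
  have hlevel (τ : ℝ) : Tendsto (fun n : ℕ => 1 - τ / n) atTop (𝓝 1) := by
    simpa using tendsto_const_nhds.sub (tendsto_const_div_atTop_nhds_zero_nat τ)
  have hF : Tendsto (fun n : ℕ => F (1 - τ₁ / n, 1 - τ₂ / n)) atTop
      (𝓝 (2 * τ₁ + τ₂ - min τ₁ τ₂)) := by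
    have hcont : Continuous F := by fun_prop
    have hF₁ : F (1, 1) = 2 * τ₁ + τ₂ - min τ₁ τ₂ := by norm_num [F]; ring
    rw [← hF₁]
    exact (hcont.tendsto (1, 1)).comp ((hlevel τ₁).prodMk_nhds (hlevel τ₂))
  refine hF.congr' ?_
  filter_upwards [eventually_gt_atTop 0] with n hn
  have hgap : 1 - max (1 - τ₁ / n) (1 - τ₂ / n) = min τ₁ τ₂ / n := by
    rw [max_sub_sub_left, sub_sub_cancel, min_div_div_right (Nat.cast_nonneg n)]
  simp only [F, upcrossingProb, hgap]
  field_simp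
  ring

lemma one_sub_div_mem_Icc {τ x : ℝ} (hτ : 0 ≤ τ) (hx : τ ≤ x) : 1 - τ / x ∈ Icc (0:ℝ) 1 :=
  ⟨sub_nonneg.2 (div_le_one_of_le₀ hx (hτ.trans hx)), sub_le_self 1 (div_nonneg hτ (hτ.trans hx))⟩

structure IsIIDUniform {Ω : Type*} [MeasurableSpace Ω] (P : Measure Ω) (Y : ℤ → Ω → ℝ) :
    Prop where
  measurable : ∀ i, Measurable (Y i)
  indep : iIndepFun Y P
  map_eq : ∀ i, P.map (Y i) = unitUniform

section Events

variable {Ω : Type*}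

def upcrossing (Z : ℕ → Ω → ℝ) (u : ℝ) : Set Ω := {ω | Z 1 ω ≤ u ∧ u < Z 2 ω}

def movingMax (Y : ℤ → Ω → ℝ) (i : ℕ) (ω : Ω) : ℝ :=
  max (Y i ω) (max (Y (i - 2) ω) (Y (i - 3) ω))

def window (Y : ℤ → Ω → ℝ) (B₀ B₁ B₂ B₃ B₄ : Set ℝ) : Set Ω :=
  {ω | Y (-2) ω ∈ B₀ ∧ Y (-1) ω ∈ B₁ ∧ Y 0 ω ∈ B₂ ∧ Y 1 ω ∈ B₃ ∧ Y 2 ω ∈ B₄}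

end Events

namespace IsIIDUniform

variable {Ω : Type*} [MeasurableSpace Ω] {P : Measure Ω} {Y : ℤ → Ω → ℝ}
  {B₀ B₁ B₂ B₃ B₄ : Set ℝ} {a b : ℝ}

lemma isProbabilityMeasure (hY : IsIIDUniform P Y) : IsProbabilityMeasure P where
  measure_univ := by
    rw [← preimage_univ (f := Y 0), ← Measure.map_apply (hY.measurable 0) MeasurableSet.univ,
      hY.map_eq]
    simp

lemma measureReal_preimage (hY : IsIIDUniform P Y) (i : ℤ) {B : Set ℝ} (hB : MeasurableSet B) :
    P.real (Y i ⁻¹' B) = unitUniform.real B := by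
  rw [← hY.map_eq i, map_measureReal_apply (hY.measurable i) hB]

lemma measurableSet_window (hY : IsIIDUniform P Y)
    (h₀ : MeasurableSet B₀) (h₁ : MeasurableSet B₁) (h₂ : MeasurableSet B₂)
    (h₃ : MeasurableSet B₃) (h₄ : MeasurableSet B₄) :
    MeasurableSet (window Y B₀ B₁ B₂ B₃ B₄) :=
  (hY.measurable _ h₀).inter <| (hY.measurable _ h₁).inter <| (hY.measurable _ h₂).inter <|
    (hY.measurable _ h₃).inter (hY.measurable _ h₄)

lemma measureReal_window (hY : IsIIDUniform P Y)
    (h₀ : MeasurableSet B₀) (h₁ : MeasurableSet B₁) (h₂ : MeasurableSet B₂)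
    (h₃ : MeasurableSet B₃) (h₄ : MeasurableSet B₄) :
    P.real (window Y B₀ B₁ B₂ B₃ B₄) = unitUniform.real B₀ * unitUniform.real B₁ *
      unitUniform.real B₂ * unitUniform.real B₃ * unitUniform.real B₄ := by
  set B : Fin 5 → Set ℝ := ![B₀, B₁, B₂, B₃, B₄]
  have hB : ∀ k, MeasurableSet (B k) := by
    intro k; fin_cases k <;> assumption
  have hindep : iIndepFun (fun k : Fin 5 => Y ((k : ℤ) - 2)) P :=
    hY.indep.precomp fun j k h => by simpa [Fin.val_inj] using h
  have hwindow : window Y B₀ B₁ B₂ B₃ B₄ =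
      ⋂ k ∈ (Finset.univ : Finset (Fin 5)), Y ((k : ℤ) - 2) ⁻¹' B k := by
    ext ω; simp [window, B, Fin.forall_fin_succ]
  rw [measureReal_def, hwindow, hindep.measure_inter_preimage_eq_mul _ (fun k _ => hB k),
    ENNReal.toReal_prod, Fin.prod_univ_five]
  simp only [← measureReal_def, hY.measureReal_preimage _ (hB _)]
  rfl

lemma measurableSet_upcrossing (hY : IsIIDUniform P Y) (b : ℝ) :
    MeasurableSet (upcrossing (fun i : ℕ => Y i) b) :=
  (measurableSet_le (hY.measurable 1) measurable_const).inter
    (measurableSet_lt measurable_const (hY.measurable 2))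

lemma measureReal_upcrossing_movingMax (hY : IsIIDUniform P Y) (ha : a ∈ Icc (0:ℝ) 1) :
    P.real (upcrossing (movingMax Y) a) = a ^ 3 * (1 - a) * (1 + a) := by
  have := hY.isProbabilityMeasure
  -- either `Y 2` exceeds `a`, or `Y 2 ≤ a < Y 0`
  have hsplit : upcrossing (movingMax Y) a =
      window Y (Iic a) (Iic a) univ (Iic a) (Ioi a) ∪
        window Y (Iic a) (Iic a) (Ioi a) (Iic a) (Iic a) := by
    ext ω
    norm_num [upcrossing, movingMax, window]
    grind
  have hdisj : Disjoint (window Y (Iic a) (Iic a) univ (Iic a) (Ioi a))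
      (window Y (Iic a) (Iic a) (Ioi a) (Iic a) (Iic a)) :=
    disjoint_left.2 fun _ h₁ h₂ => (mem_Ioi.1 h₁.2.2.2.2).not_ge (mem_Iic.1 h₂.2.2.2.2)
  rw [hsplit, measureReal_union hdisj (hY.measurableSet_window measurableSet_Iic measurableSet_Iic
      measurableSet_Ioi measurableSet_Iic measurableSet_Iic),
    hY.measureReal_window measurableSet_Iic measurableSet_Iic MeasurableSet.univ measurableSet_Iic
      measurableSet_Ioi,
    hY.measureReal_window measurableSet_Iic measurableSet_Iic measurableSet_Ioi measurableSet_Iic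
      measurableSet_Iic,
    unitUniform_real_Iic ha, unitUniform_real_Ioi ha, unitUniform_real_univ]
  ring

lemma measureReal_upcrossing (hY : IsIIDUniform P Y) (hb : b ∈ Icc (0:ℝ) 1) :
    P.real (upcrossing (fun i : ℕ => Y i) b) = b * (1 - b) := by
  have hwindow : upcrossing (fun i : ℕ => Y i) b = window Y univ univ univ (Iic b) (Ioi b) := by
    ext ω; simp [upcrossing, window]
  rw [hwindow, hY.measureReal_window MeasurableSet.univ MeasurableSet.univ MeasurableSet.univ
      measurableSet_Iic measurableSet_Ioi,
    unitUniform_real_Iic hb, unitUniform_real_Ioi hb, unitUniform_real_univ]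
  ring

lemma measureReal_upcrossing_movingMax_inter (hY : IsIIDUniform P Y) (ha : a ∈ Icc (0:ℝ) 1)
    (hb : b ∈ Icc (0:ℝ) 1) :
    P.real (upcrossing (movingMax Y) a ∩ upcrossing (fun i : ℕ => Y i) b) =
      a ^ 2 * min a b * (1 - max a b) + a ^ 2 * (1 - a) * min a b * max (a - b) 0 := by
  have := hY.isProbabilityMeasure
  -- `Y 2 > b`, so either `Y 2` exceeds both levels, or `b < Y 2 ≤ a < Y 0`
  have hsplit : upcrossing (movingMax Y) a ∩ upcrossing (fun i : ℕ => Y i) b =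
      window Y (Iic a) (Iic a) univ (Iic (min a b)) (Ioi (max a b)) ∪
        window Y (Iic a) (Iic a) (Ioi a) (Iic (min a b)) (Ioc b a) := by
    ext ω
    norm_num [upcrossing, movingMax, window]
    grind
  have hdisj : Disjoint (window Y (Iic a) (Iic a) univ (Iic (min a b)) (Ioi (max a b)))
      (window Y (Iic a) (Iic a) (Ioi a) (Iic (min a b)) (Ioc b a)) :=
    disjoint_left.2 fun _ h₁ h₂ =>
      ((le_max_left a b).trans_lt (mem_Ioi.1 h₁.2.2.2.2)).not_ge (mem_Ioc.1 h₂.2.2.2.2).2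
  have hmin : min a b ∈ Icc (0:ℝ) 1 := ⟨le_min ha.1 hb.1, (min_le_left a b).trans ha.2⟩
  have hmax : max a b ∈ Icc (0:ℝ) 1 := ⟨ha.1.trans (le_max_left a b), max_le ha.2 hb.2⟩
  rw [hsplit, measureReal_union hdisj (hY.measurableSet_window measurableSet_Iic measurableSet_Iic
      measurableSet_Ioi measurableSet_Iic measurableSet_Ioc),
    hY.measureReal_window measurableSet_Iic measurableSet_Iic MeasurableSet.univ measurableSet_Iic
      measurableSet_Ioi,
    hY.measureReal_window measurableSet_Iic measurableSet_Iic measurableSet_Ioi measurableSet_Iic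
      measurableSet_Ioc,
    unitUniform_real_Iic ha, unitUniform_real_Iic hmin, unitUniform_real_Ioi ha,
    unitUniform_real_Ioi hmax, unitUniform_real_Ioc hb.1 ha.2, unitUniform_real_univ]
  ring

lemma measureReal_upcrossing_movingMax_union (hY : IsIIDUniform P Y) (ha : a ∈ Icc (0:ℝ) 1)
    (hb : b ∈ Icc (0:ℝ) 1) :
    P.real (upcrossing (movingMax Y) a ∪ upcrossing (fun i : ℕ => Y i) b) =
      upcrossingProb a b := by
  have := hY.isProbabilityMeasure
  have h := measureReal_union_add_inter (μ := P) (s := upcrossing (movingMax Y) a)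
    (hY.measurableSet_upcrossing b)
  rw [hY.measureReal_upcrossing_movingMax ha, hY.measureReal_upcrossing hb,
    hY.measureReal_upcrossing_movingMax_inter ha hb] at h
  rw [upcrossingProb]
  linarith

end IsIIDUniform

theorem stmt4_general
    {Ω : Type*} [MeasurableSpace Ω] (P : Measure Ω)
    (Y : ℤ → Ω → ℝ) (hYm : ∀ i, Measurable (Y i))
    (hIndep : iIndepFun Y P)
    (hUnif : ∀ i, Measure.map (Y i) P = volume.restrict (Icc (0:ℝ) 1))
    (τ'₁ τ'₂ : ℝ) (hτ₁ : 0 < τ'₁) (hτ₂ : 0 < τ'₂)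
    (Z₁ Z₂ : ℕ → Ω → ℝ)
    (hZ₁ : ∀ i : ℕ, Z₁ i = fun ω => max (Y i ω) (max (Y ((i:ℤ) - 2) ω) (Y ((i:ℤ) - 3) ω)))
    (hZ₂ : ∀ i : ℕ, Z₂ i = fun ω => Y i ω)
    (u₁ u₂ : ℕ → ℝ) (hu₁ : ∀ n : ℕ, u₁ n = 1 - τ'₁ / n) (hu₂ : ∀ n : ℕ, u₂ n = 1 - τ'₂ / n) :
    Tendsto (fun n : ℕ => (n : ℝ) *
        (P {ω | (Z₁ 1 ω ≤ u₁ n ∧ u₁ n < Z₁ 2 ω) ∨ (Z₂ 1 ω ≤ u₂ n ∧ u₂ n < Z₂ 2 ω)}).toReal)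
      atTop (nhds (2 * τ'₁ + τ'₂ - min τ'₁ τ'₂)) := by
  have hY : IsIIDUniform P Y := ⟨hYm, hIndep, hUnif⟩
  obtain rfl : Z₁ = movingMax Y := funext hZ₁
  obtain rfl : Z₂ = fun i : ℕ => Y i := funext hZ₂
  obtain rfl : u₁ = fun n : ℕ => 1 - τ'₁ / n := funext hu₁
  obtain rfl : u₂ = fun n : ℕ => 1 - τ'₂ / n := funext hu₂
  refine (tendsto_mul_upcrossingProb τ'₁ τ'₂).congr' ?_
  filter_upwards [eventually_ge_atTop ⌈max τ'₁ τ'₂⌉₊] with n hn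
  have hτn : max τ'₁ τ'₂ ≤ n := Nat.ceil_le.1 hn
  change _ = n * P.real (upcrossing (movingMax Y) _ ∪ upcrossing (fun i : ℕ => Y i) _)
  rw [hY.measureReal_upcrossing_movingMax_union
    (one_sub_div_mem_Icc hτ₁.le ((le_max_left _ _).trans hτn))
    (one_sub_div_mem_Icc hτ₂.le ((le_max_right _ _).trans hτn))]

theorem stmt4
    {Ω : Type*} [MeasurableSpace Ω] (P : Measure Ω) [IsProbabilityMeasure P]
    (Y : ℤ → Ω → ℝ) (hYm : ∀ i, Measurable (Y i))
    (hIndep : iIndepFun Y P)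
    (hUnif : ∀ i, Measure.map (Y i) P = volume.restrict (Icc (0:ℝ) 1))
    (τ'₁ τ'₂ : ℝ) (hτ₁ : 0 < τ'₁) (hτ₂ : 0 < τ'₂)
    (Z₁ Z₂ : ℕ → Ω → ℝ)
    (hZ₁ : ∀ i : ℕ, Z₁ i = fun ω => max (Y i ω) (max (Y ((i:ℤ) - 2) ω) (Y ((i:ℤ) - 3) ω)))
    (hZ₂ : ∀ i : ℕ, Z₂ i = fun ω => Y i ω)
    (u₁ u₂ : ℕ → ℝ) (hu₁ : ∀ n : ℕ, u₁ n = 1 - τ'₁ / n) (hu₂ : ∀ n : ℕ, u₂ n = 1 - τ'₂ / n) :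
    Tendsto (fun n : ℕ => (n : ℝ) *
        (P {ω | (Z₁ 1 ω ≤ u₁ n ∧ u₁ n < Z₁ 2 ω) ∨ (Z₂ 1 ω ≤ u₂ n ∧ u₂ n < Z₂ 2 ω)}).toReal)
      atTop (nhds (2 * τ'₁ + τ'₂ - min τ'₁ τ'₂)) :=
  stmt4_general P Y hYm hIndep hUnif τ'₁ τ'₂ hτ₁ hτ₂ Z₁ Z₂ hZ₁ hZ₂ u₁ u₂ hu₁ hu₂
end

section
/- Suppose a stationary d-dimensional sequence X has multivariate extremal index θ(τ) with respect to levels u_n satisfying n·P(⋃_{j=1}^d {X_{1,j} > u_{n,j}}) → T > 0 and n·P(⋃_{j=1}^d {X_{1,j} ≤ u_{n,j} < X_{2,j}}) → V > 0, and that X has multivariate upcrossings index η(ν) with respect to the same levels. Then η(ν) = (T/V)·θ(τ). In particular, since by definition both indices lie in [0,1] and the upcrossing event at time 1 implies the exceedance event at time 2, one has V ≤ T and hence θ(τ) ≤ η(ν)·(V/T). -/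
open MeasureTheory ProbabilityTheory Filter Set Topology

/-!
On `{Mₙ ≤ uₙ}` an upcrossing within times `1, …, n` can only happen at time `n`, and on
`{no upcrossing within 1, …, n}` an exceedance at some time `m ≤ n` propagates back to time `1`.
By stationarity the two events therefore differ by at most `P(upcrossing at 1) + P(exceedance at 1)`,
which is `O(1/n)`. Hence `exp (-θT)` and `exp (-ηV)` are limits of the same sequence, i.e.
`θT = ηV`. Finally `V ≤ T` because an upcrossing at time `1` is an exceedance at time `2`.
-/

section Events

variable {Ω ι α : Type*} [LinearOrder α]

def allLe (X : ℕ → Ω → ι → α) (v : ι → α) (n : ℕ) : Set Ω :=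
  {ω | ∀ i ∈ Finset.Icc 1 n, ∀ j, X i ω j ≤ v j}

def noUpcrossing (X : ℕ → Ω → ι → α) (v : ι → α) (n : ℕ) : Set Ω :=
  {ω | ∀ i ∈ Finset.Icc 1 n, ∀ j, ¬(X i ω j ≤ v j ∧ v j < X (i + 1) ω j)}

def upcrossingAt (X : ℕ → Ω → ι → α) (v : ι → α) (i : ℕ) : Set Ω :=
  {ω | ∃ j, X i ω j ≤ v j ∧ v j < X (i + 1) ω j}

def exceedanceAt (X : ℕ → Ω → ι → α) (v : ι → α) (i : ℕ) : Set Ω :=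
  {ω | ∃ j, v j < X i ω j}

lemma lt_one_of_no_upcrossing {a : ℕ → α} {c : α} {n m : ℕ}
    (hno : ∀ i ∈ Finset.Icc 1 n, ¬(a i ≤ c ∧ c < a (i + 1)))
    (hm : m ∈ Finset.Icc 1 n) (hc : c < a m) : c < a 1 := by
  rw [Finset.mem_Icc] at hm
  induction m, hm.1 using Nat.le_induction with
  | base => exact hc
  | succ m hm1 ih =>
    have hcm : c < a m := by
      by_contra hle
      exact hno m (Finset.mem_Icc.2 ⟨hm1, by omega⟩) ⟨not_lt.1 hle, hc⟩
    exact ih ⟨hm1, by omega⟩ hcm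

lemma eq_of_forall_le_of_lt_succ {a : ℕ → α} {c : α} {n i : ℕ}
    (hle : ∀ k ∈ Finset.Icc 1 n, a k ≤ c) (hi : i ∈ Finset.Icc 1 n) (hc : c < a (i + 1)) :
    i = n := by
  rw [Finset.mem_Icc] at hi
  by_contra hne
  exact (hle (i + 1) (Finset.mem_Icc.2 ⟨by omega, by omega⟩)).not_gt hc

variable {X : ℕ → Ω → ι → α} {v : ι → α}

lemma allLe_sdiff_noUpcrossing_subset (n : ℕ) :
    allLe X v n \ noUpcrossing X v n ⊆ upcrossingAt X v n := by
  rintro ω ⟨hle, hup⟩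
  simp only [noUpcrossing, mem_ofPred_eq, not_forall, not_not] at hup
  obtain ⟨i, hi, j, hij⟩ := hup
  obtain rfl := eq_of_forall_le_of_lt_succ (fun k hk => hle k hk j) hi hij.2
  exact ⟨j, hij⟩

lemma noUpcrossing_sdiff_allLe_subset (n : ℕ) :
    noUpcrossing X v n \ allLe X v n ⊆ exceedanceAt X v 1 := by
  rintro ω ⟨hno, hle⟩
  simp only [allLe, mem_ofPred_eq, not_forall, not_le] at hle
  obtain ⟨i, hi, j, hij⟩ := hle
  exact ⟨j, lt_one_of_no_upcrossing (fun k hk => hno k hk j) hi hij⟩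

lemma upcrossingAt_subset_exceedanceAt_succ (i : ℕ) :
    upcrossingAt X v i ⊆ exceedanceAt X v (i + 1) :=
  fun _ ⟨j, hj⟩ => ⟨j, hj.2⟩

end Events

section Stationary

variable {Ω β : Type*} [MeasurableSpace Ω] [MeasurableSpace β] {P : Measure Ω}
  {X : ℕ → Ω → β}

def IsStationaryProcess (P : Measure Ω) (X : ℕ → Ω → β) : Prop :=
  P.map (fun ω i => X (i + 1) ω) = P.map (fun ω i => X i ω)

lemma identDistrib_shift (hXm : ∀ i, Measurable (X i))
    (hstat : IsStationaryProcess P X) (k : ℕ) :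
    IdentDistrib (fun ω i => X (i + k) ω) (fun ω i => X i ω) P P := by
  have hpath : ∀ k, Measurable (fun ω i => X (i + k) ω) :=
    fun k => measurable_pi_lambda _ fun i => hXm (i + k)
  refine ⟨(hpath k).aemeasurable, (hpath 0).aemeasurable, ?_⟩
  induction k with
  | zero => rfl
  | succ k ih =>
    have hshift : Measurable (fun (f : ℕ → β) i => f (i + k)) :=
      measurable_pi_lambda _ fun i => measurable_pi_apply (i + k)
    calc Measure.map (fun ω i => X (i + (k + 1)) ω) P
        = Measure.map (fun (f : ℕ → β) i => f (i + k))
            (Measure.map (fun ω i => X (i + 1) ω) P) :=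
          (Measure.map_map hshift (hpath 1)).symm
      _ = Measure.map (fun ω i => X i ω) P := by
          rw [hstat, Measure.map_map hshift (measurable_pi_lambda _ hXm)]
          exact ih

end Stationary

section Probability

variable {Ω ι α : Type*} [MeasurableSpace Ω] [Countable ι] [LinearOrder α] [TopologicalSpace α]
  [OrderClosedTopology α] [MeasurableSpace α] [OpensMeasurableSpace α]
  {X : ℕ → Ω → ι → α} {v : ι → α}

lemma measurableSet_upcrossingAt (hXm : ∀ i, Measurable (X i)) (i : ℕ) :
    MeasurableSet (upcrossingAt X v i) := by
  simp only [upcrossingAt, ofPred_exists, ofPred_and]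
  exact .iUnion fun j => ((measurable_pi_apply j).comp (hXm i) measurableSet_Iic).inter
    ((measurable_pi_apply j).comp (hXm (i + 1)) measurableSet_Ioi)

lemma measurableSet_exceedanceAt (hXm : ∀ i, Measurable (X i)) (i : ℕ) :
    MeasurableSet (exceedanceAt X v i) := by
  simp only [exceedanceAt, ofPred_exists]
  exact .iUnion fun j => (measurable_pi_apply j).comp (hXm i) measurableSet_Ioi

variable {P : Measure Ω}

lemma measure_upcrossingAt_succ (hXm : ∀ i, Measurable (X i))
    (hstat : IsStationaryProcess P X) (k : ℕ) :
    P (upcrossingAt X v (k + 1)) = P (upcrossingAt X v 1) := by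
  -- the event for the coordinate process on path space pulls back to the event for `X` at `k + 1`
  have h := (identDistrib_shift hXm hstat k).measure_mem_eq
    (measurableSet_upcrossingAt (X := fun i (f : ℕ → ι → α) => f i) (v := v) measurable_pi_apply 1)
  simpa only [upcrossingAt, preimage_ofPred_eq, Nat.add_comm _ k] using h

lemma measure_exceedanceAt_succ (hXm : ∀ i, Measurable (X i))
    (hstat : IsStationaryProcess P X) (k : ℕ) :
    P (exceedanceAt X v (k + 1)) = P (exceedanceAt X v 1) := by
  have h := (identDistrib_shift hXm hstat k).measure_mem_eq
    (measurableSet_exceedanceAt (X := fun i (f : ℕ → ι → α) => f i) (v := v) measurable_pi_apply 1)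
  simpa only [exceedanceAt, preimage_ofPred_eq, Nat.add_comm _ k] using h

lemma abs_measureReal_allLe_sub_noUpcrossing_le [IsFiniteMeasure P]
    (hXm : ∀ i, Measurable (X i))
    (hstat : IsStationaryProcess P X) {n : ℕ} (hn : 1 ≤ n) :
    |P.real (allLe X v n) - P.real (noUpcrossing X v n)|
      ≤ P.real (exceedanceAt X v 1) + P.real (upcrossingAt X v 1) := by
  obtain ⟨k, rfl⟩ := Nat.exists_eq_add_of_le' hn
  have hup : P.real (upcrossingAt X v (k + 1)) = P.real (upcrossingAt X v 1) := by
    rw [measureReal_def, measure_upcrossingAt_succ hXm hstat k, measureReal_def]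
  have hexc_nonneg := measureReal_nonneg (μ := P) (s := exceedanceAt X v 1)
  have hup_nonneg := measureReal_nonneg (μ := P) (s := upcrossingAt X v 1)
  rw [abs_sub_le_iff]
  constructor
  · calc P.real (allLe X v (k + 1)) - P.real (noUpcrossing X v (k + 1))
        ≤ P.real (allLe X v (k + 1) \ noUpcrossing X v (k + 1)) := le_measureReal_sdiff
      _ ≤ P.real (upcrossingAt X v (k + 1)) :=
          measureReal_mono (allLe_sdiff_noUpcrossing_subset _)
      _ ≤ _ := by linarith
  · calc P.real (noUpcrossing X v (k + 1)) - P.real (allLe X v (k + 1))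
        ≤ P.real (noUpcrossing X v (k + 1) \ allLe X v (k + 1)) := le_measureReal_sdiff
      _ ≤ P.real (exceedanceAt X v 1) := measureReal_mono (noUpcrossing_sdiff_allLe_subset _)
      _ ≤ _ := by linarith

lemma measureReal_upcrossingAt_one_le [IsFiniteMeasure P]
    (hXm : ∀ i, Measurable (X i))
    (hstat : IsStationaryProcess P X) :
    P.real (upcrossingAt X v 1) ≤ P.real (exceedanceAt X v 1) :=
  ENNReal.toReal_mono (measure_ne_top _ _)
    ((measure_mono (upcrossingAt_subset_exceedanceAt_succ 1)).trans_eq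
      (measure_exceedanceAt_succ hXm hstat 1))

end Probability

lemma tendsto_zero_of_tendsto_natCast_mul {a : ℕ → ℝ} {c : ℝ}
    (h : Tendsto (fun n : ℕ => (n : ℝ) * a n) atTop (𝓝 c)) : Tendsto a atTop (𝓝 0) := by
  refine (h.div_atTop tendsto_natCast_atTop_atTop).congr' ?_
  filter_upwards [eventually_ne_atTop 0] with n hn
  field_simp

theorem stmt5_general
    {Ω : Type*} [MeasurableSpace Ω] (P : Measure Ω) [IsProbabilityMeasure P]
    {d : ℕ}
    (X : ℕ → Ω → (Fin d → ℝ)) (hXm : ∀ i, Measurable (X i))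
    (hstat : Measure.map (fun ω => fun i : ℕ => X (i + 1) ω) P
      = Measure.map (fun ω => fun i : ℕ => X i ω) P)
    (u : ℕ → Fin d → ℝ)
    (T V θ η : ℝ) (hT : 0 < T) (hV : 0 < V)
    -- n · P(⋃ⱼ {X_{1,j} > u_{n,j}}) → T
    (hTlim : Tendsto (fun n : ℕ => (n : ℝ) * (P {ω | ∃ j, u n j < X 1 ω j}).toReal)
      atTop (nhds T))
    -- n · P(⋃ⱼ {X_{1,j} ≤ u_{n,j} < X_{2,j}}) → V
    (hVlim : Tendsto (fun n : ℕ =>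
        (n : ℝ) * (P {ω | ∃ j, X 1 ω j ≤ u n j ∧ u n j < X 2 ω j}).toReal)
      atTop (nhds V))
    -- multivariate extremal index θ: P(Mₙ ≤ uₙ) → Ψ̂(τ)^θ with Ψ̂(τ) = exp (−T)
    (hθlim : Tendsto (fun n : ℕ =>
        (P {ω | ∀ i ∈ Finset.Icc 1 n, ∀ j, X i ω j ≤ u n j}).toReal)
      atTop (nhds (Real.exp (-(θ * T)))))
    -- multivariate upcrossings index η: P(no upcrossing in 1..n) → φ(ν)^η with φ(ν) = exp (−V)
    (hηlim : Tendsto (fun n : ℕ =>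
        (P {ω | ∀ i ∈ Finset.Icc 1 n, ∀ j,
          ¬(X i ω j ≤ u n j ∧ u n j < X (i + 1) ω j)}).toReal)
      atTop (nhds (Real.exp (-(η * V))))) :
    η = (T / V) * θ ∧ V ≤ T ∧ θ ≤ η * (V / T) := by
  have hE : Tendsto (fun n => P.real (exceedanceAt X (u n) 1)) atTop (𝓝 0) :=
    tendsto_zero_of_tendsto_natCast_mul hTlim
  have hF : Tendsto (fun n => P.real (upcrossingAt X (u n) 1)) atTop (𝓝 0) :=
    tendsto_zero_of_tendsto_natCast_mul hVlim
  have hdiff : Tendsto (fun n => P.real (allLe X (u n) n) - P.real (noUpcrossing X (u n) n))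
      atTop (𝓝 0) := by
    refine squeeze_zero_norm' ?_ (by simpa using hE.add hF)
    filter_upwards [eventually_ge_atTop 1] with n hn
    exact abs_measureReal_allLe_sub_noUpcrossing_le hXm hstat hn
  have hA : Tendsto (fun n => P.real (allLe X (u n) n)) atTop (𝓝 (Real.exp (-(η * V)))) := by
    simpa only [add_zero] using (hηlim.add hdiff).congr fun n => add_sub_cancel _ _
  have hexp : Real.exp (-(θ * T)) = Real.exp (-(η * V)) := tendsto_nhds_unique hθlim hA
  have hθη : θ * T = η * V := by simpa using hexp
  have hVT : V ≤ T := le_of_tendsto_of_tendsto' hVlim hTlim fun n =>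
    mul_le_mul_of_nonneg_left (measureReal_upcrossingAt_one_le hXm hstat) n.cast_nonneg
  refine ⟨?_, hVT, le_of_eq ?_⟩ <;> field_simp <;> linarith

theorem stmt5
    {Ω : Type*} [MeasurableSpace Ω] (P : Measure Ω) [IsProbabilityMeasure P]
    {d : ℕ} (hd : 0 < d)
    (X : ℕ → Ω → (Fin d → ℝ)) (hXm : ∀ i, Measurable (X i))
    (hstat : Measure.map (fun ω => fun i : ℕ => X (i + 1) ω) P
      = Measure.map (fun ω => fun i : ℕ => X i ω) P)
    (u : ℕ → Fin d → ℝ)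
    (T V θ η : ℝ) (hT : 0 < T) (hV : 0 < V)
    (hθ01 : θ ∈ Icc (0:ℝ) 1) (hη01 : η ∈ Icc (0:ℝ) 1)
    -- n · P(⋃ⱼ {X_{1,j} > u_{n,j}}) → T
    (hTlim : Tendsto (fun n : ℕ => (n : ℝ) * (P {ω | ∃ j, u n j < X 1 ω j}).toReal)
      atTop (nhds T))
    -- n · P(⋃ⱼ {X_{1,j} ≤ u_{n,j} < X_{2,j}}) → V
    (hVlim : Tendsto (fun n : ℕ =>
        (n : ℝ) * (P {ω | ∃ j, X 1 ω j ≤ u n j ∧ u n j < X 2 ω j}).toReal)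
      atTop (nhds V))
    -- multivariate extremal index θ: P(Mₙ ≤ uₙ) → Ψ̂(τ)^θ with Ψ̂(τ) = exp (−T)
    (hθlim : Tendsto (fun n : ℕ =>
        (P {ω | ∀ i ∈ Finset.Icc 1 n, ∀ j, X i ω j ≤ u n j}).toReal)
      atTop (nhds (Real.exp (-(θ * T)))))
    -- multivariate upcrossings index η: P(no upcrossing in 1..n) → φ(ν)^η with φ(ν) = exp (−V)
    (hηlim : Tendsto (fun n : ℕ =>
        (P {ω | ∀ i ∈ Finset.Icc 1 n, ∀ j,
          ¬(X i ω j ≤ u n j ∧ u n j < X (i + 1) ω j)}).toReal)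
      atTop (nhds (Real.exp (-(η * V))))) :
    η = (T / V) * θ ∧ V ≤ T ∧ θ ≤ η * (V / T) :=
  stmt5_general P X hXm hstat u T V θ η hT hV hTlim hVlim hθlim hηlim
end

section
/- Let (Y_n)_{n≥-2} be i.i.d. uniform on [0,1], Z_{n,1} = max{Y_n, Y_{n-2}, Y_{n-3}}, Z_{n,2} = Y_n, u_{n,j} = 1 − τ'_j/n with τ'_j > 0, and A_{i,n} = ⋃_{j=1,2}{Z_{i,j} ≤ u_{n,j} < Z_{i+1,j}}. Then n·P(A_{1,n} ∩ A_{2,n}^c ∩ A_{3,n}^c) → τ'_2 if τ'_2 ≥ τ'_1 and → τ'_1 if τ'_2 < τ'_1. Consequently the ratio P(A_{1,n} ∩ A_{2,n}^c ∩ A_{3,n}^c)/P(A_{1,n}) converges to τ'_2/(τ'_1 + τ'_2) when τ'_2 ≥ τ'_1 and to 1/2 when τ'_2 < τ'_1. -/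
open MeasureTheory ProbabilityTheory Filter Set
open Topology

noncomputable def reg (m M x : ℝ) : Fin 3 := if x ≤ m then (0:Fin 3) else if x ≤ M then 1 else 2
noncomputable def lenR (m M : ℝ) (v : Fin 3) : ℝ := if v = 0 then m else if v = 1 then M - m else 1 - M

def lo (v : Fin 3) : Bool := v == 0
def hi (v : Fin 3) : Bool := v != 2
def emb (k : Fin 7) : ℤ := (k.val : ℤ) - 2
def finOf (j : ℤ) : Fin 7 := ⟨(j + 2).toNat % 7, Nat.mod_lt _ (by norm_num)⟩
def bA1 (la lb : Fin 3 → Bool) (ρ : Fin 7 → Fin 3) : Bool :=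
  (la (ρ 3) && la (ρ 1) && la (ρ 0) && (!la (ρ 4) || !la (ρ 2) || !la (ρ 1))) || (lb (ρ 3) && !lb (ρ 4))
def bA2 (la lb : Fin 3 → Bool) (ρ : Fin 7 → Fin 3) : Bool :=
  (la (ρ 4) && la (ρ 2) && la (ρ 1) && (!la (ρ 5) || !la (ρ 3) || !la (ρ 2))) || (lb (ρ 4) && !lb (ρ 5))
def bA3 (la lb : Fin 3 → Bool) (ρ : Fin 7 → Fin 3) : Bool :=
  (la (ρ 5) && la (ρ 3) && la (ρ 2) && (!la (ρ 6) || !la (ρ 4) || !la (ρ 3))) || (lb (ρ 5) && !lb (ρ 6))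
def bB (la lb : Fin 3 → Bool) (ρ : Fin 7 → Fin 3) : Bool := (bA1 la lb ρ && !bA2 la lb ρ) && !bA3 la lb ρ
def small (ρ : Fin 7 → Fin 3) : Bool := (Finset.univ.filter (fun k => ρ k ≠ 0)).card ≤ 1
def sing (v : Fin 3) (i : Fin 7) : Fin 7 → Fin 3 := Function.update (fun _ => (0:Fin 3)) i v

lemma le_M_iff {m M : ℝ} (hmM : m ≤ M) (x : ℝ) : x ≤ M ↔ hi (reg m M x) = true := by
  unfold reg hi; split_ifs <;> simp_all <;> linarith
lemma lt_M_iff {m M : ℝ} (hmM : m ≤ M) (x : ℝ) : M < x ↔ hi (reg m M x) = false := by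
  rw [← not_le, le_M_iff hmM, Bool.not_eq_true]
lemma le_m_iff {m M : ℝ} (hmM : m ≤ M) (x : ℝ) : x ≤ m ↔ lo (reg m M x) = true := by
  unfold reg lo; split_ifs <;> simp_all
lemma lt_m_iff {m M : ℝ} (hmM : m ≤ M) (x : ℝ) : m < x ↔ lo (reg m M x) = false := by
  rw [← not_le, le_m_iff hmM, Bool.not_eq_true]

lemma regSet_eq (m M : ℝ) (hmM : m ≤ M) (v : Fin 3) :
    {x : ℝ | reg m M x = v} = if v = 0 then Iic m else if v = 1 then Ioc m M else Ioi M := by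
  fin_cases v <;> ext x <;> simp only [mem_setOf_eq, reg] <;> split_ifs <;>
    simp_all [mem_Iic, mem_Ioc, mem_Ioi, not_le, Fin.ext_iff] <;> linarith

lemma lenR_nonneg (m M : ℝ) (h0 : 0 ≤ m) (hmM : m ≤ M) (hM1 : M ≤ 1) (v : Fin 3) :
    0 ≤ lenR m M v := by
  fin_cases v <;> simp [lenR, Fin.ext_iff] <;> linarith

lemma lenR_le_max (m M : ℝ) (v : Fin 3) (hv : v ≠ 0) :
    lenR m M v ≤ max (M - m) (1 - M) := by
  unfold lenR
  split_ifs with h1 h2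
  · exact absurd h1 hv
  · exact le_max_left _ _
  · exact le_max_right _ _

lemma lenR_le_one (m M : ℝ) (h0 : 0 ≤ m) (hmM : m ≤ M) (hM1 : M ≤ 1) (v : Fin 3) :
    lenR m M v ≤ 1 := by
  fin_cases v <;> simp [lenR, Fin.ext_iff] <;> linarith

lemma reg_prob (m M : ℝ) (h0 : 0 ≤ m) (hmM : m ≤ M) (hM1 : M ≤ 1) (v : Fin 3) :
    (volume.restrict (Icc (0:ℝ) 1)) {x : ℝ | reg m M x = v} = ENNReal.ofReal (lenR m M v) := by
  rw [regSet_eq m M hmM]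
  fin_cases v <;> simp only [lenR, Fin.ext_iff] <;> norm_num
  · rw [show Iic m ∩ Icc (0:ℝ) 1 = Icc 0 m from by
        ext x; simp only [mem_inter_iff, mem_Iic, mem_Icc]; constructor
        · rintro ⟨h1, h2, h3⟩; exact ⟨h2, h1⟩
        · rintro ⟨h1, h2⟩; exact ⟨h2, h1, (h2.trans hmM).trans hM1⟩, Real.volume_Icc]
    norm_num
  · rw [show Ioc m M ∩ Icc (0:ℝ) 1 = Ioc m M from inter_eq_left.2
        (fun x hx => ⟨le_trans h0 hx.1.le, hx.2.trans hM1⟩), Real.volume_Ioc]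
  · rw [show Ioi M ∩ Icc (0:ℝ) 1 = Ioc M 1 from by
        ext x; simp only [mem_inter_iff, mem_Ioi, mem_Icc, mem_Ioc]; constructor
        · rintro ⟨h1, _, h3⟩; exact ⟨h1, h3⟩
        · rintro ⟨h1, h2⟩; exact ⟨h1, (h0.trans hmM).trans h1.le, h2⟩, Real.volume_Ioc]

lemma reg_measurable (m M : ℝ) : Measurable (reg m M) := by
  unfold reg
  exact Measurable.ite measurableSet_Iic measurable_const
    (Measurable.ite measurableSet_Iic measurable_const measurable_const)

lemma regSet_measurable (m M : ℝ) (v : Fin 3) : MeasurableSet {x : ℝ | reg m M x = v} :=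
  reg_measurable m M (measurableSet_singleton v)

lemma finOf_emb (k : Fin 7) : finOf (emb k) = k := by
  have hk := k.isLt
  apply Fin.ext
  simp only [finOf, emb]
  omega

lemma emb_inj : Function.Injective emb := by
  intro a b h
  have := congrArg finOf h
  rwa [finOf_emb, finOf_emb] at this

lemma hProd_of_indep {Ω : Type*} [MeasurableSpace Ω] (P : Measure Ω) [IsProbabilityMeasure P]
    (Y : ℤ → Ω → ℝ)
    (hIndep : iIndepFun Y P)
    (S : Fin 7 → Set ℝ) (hS : ∀ k, MeasurableSet (S k)) :
    P (⋂ k, (Y (emb k))⁻¹' S k) = ∏ k, P ((Y (emb k))⁻¹' S k) := by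
  classical
  set J : Finset ℤ := Finset.univ.image emb with hJ
  have h := hIndep.meas_biInter (S := J) (s := fun j => (Y j)⁻¹' S (finOf j))
    (fun j _ => ⟨S (finOf j), hS _, rfl⟩)
  have hInter : (⋂ j ∈ J, (Y j)⁻¹' S (finOf j)) = ⋂ k, (Y (emb k))⁻¹' S k := by
    ext ω
    simp only [mem_iInter, mem_preimage, hJ, Finset.mem_image, Finset.mem_univ, true_and]
    constructor
    · intro h k; have := h (emb k) ⟨k, rfl⟩; rwa [finOf_emb] at this
    · rintro h j ⟨k, rfl⟩; rw [finOf_emb]; exact h k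
  have hProd' : ∏ j ∈ J, P ((Y j)⁻¹' S (finOf j)) = ∏ k, P ((Y (emb k))⁻¹' S k) := by
    rw [hJ, Finset.prod_image (fun a _ b _ h => emb_inj h)]
    exact Finset.prod_congr rfl fun k _ => by rw [finOf_emb]
  rw [hInter, hProd'] at h
  exact h

lemma core {Ω : Type*} [MeasurableSpace Ω] (P : Measure Ω) [IsProbabilityMeasure P]
    (V : Fin 7 → Ω → ℝ) (hVm : ∀ k, Measurable (V k))
    (hProd : ∀ S : Fin 7 → Set ℝ, (∀ k, MeasurableSet (S k)) →
      P (⋂ k, (V k)⁻¹' S k) = ∏ k, P ((V k)⁻¹' S k))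
    (hUnif : ∀ k, Measure.map (V k) P = volume.restrict (Icc (0:ℝ) 1))
    (m M : ℝ) (h0 : 0 ≤ m) (hmM : m ≤ M) (hM1 : M ≤ 1)
    (E : Set Ω) (q : (Fin 7 → Fin 3) → Bool)
    (hE : E = {ω | q (fun k => reg m M (V k ω)) = true}) :
    (P E).toReal = ∑ ρ ∈ Finset.univ.filter (fun ρ => q ρ = true), ∏ k, lenR m M (ρ k) := by
  have hatom : ∀ ρ : Fin 7 → Fin 3,
      P {ω | (fun k => reg m M (V k ω)) = ρ} = ENNReal.ofReal (∏ k, lenR m M (ρ k)) := by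
    intro ρ
    have hset : {ω | (fun k => reg m M (V k ω)) = ρ}
        = ⋂ k, (V k)⁻¹' {x : ℝ | reg m M x = ρ k} := by
      ext ω
      simp only [mem_setOf_eq, funext_iff, mem_iInter, mem_preimage]
    rw [hset, hProd _ (fun k => regSet_measurable m M (ρ k))]
    have hterm : ∀ k, P ((V k)⁻¹' {x : ℝ | reg m M x = ρ k})
        = ENNReal.ofReal (lenR m M (ρ k)) := by
      intro k
      rw [← Measure.map_apply (hVm k) (regSet_measurable m M (ρ k)), hUnif k,
        reg_prob m M h0 hmM hM1]
    rw [Finset.prod_congr rfl (fun k _ => hterm k), ← ENNReal.ofReal_prod_of_nonneg]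
    exact fun k _ => lenR_nonneg m M h0 hmM hM1 (ρ k)
  have hEq : E = ⋃ ρ ∈ Finset.univ.filter (fun ρ => q ρ = true),
      {ω | (fun k => reg m M (V k ω)) = ρ} := by
    rw [hE]; ext ω
    simp only [mem_setOf_eq, mem_iUnion, Finset.mem_filter, Finset.mem_univ, true_and]
    constructor
    · intro h; exact ⟨_, h, rfl⟩
    · rintro ⟨ρ, hq, hρ⟩; rw [hρ]; exact hq
  rw [hEq, measure_biUnion_finset ?hd ?hm]
  · rw [ENNReal.toReal_sum (by intro ρ _; rw [hatom ρ]; exact ENNReal.ofReal_ne_top)]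
    refine Finset.sum_congr rfl fun ρ _ => ?_
    rw [hatom ρ, ENNReal.toReal_ofReal
      (Finset.prod_nonneg fun k _ => lenR_nonneg m M h0 hmM hM1 (ρ k))]
  case hd =>
    intro ρ₁ _ ρ₂ _ hne
    refine Set.disjoint_left.2 fun ω h1 h2 => hne ?_
    rw [← h1, ← h2]
  case hm =>
    intro ρ _
    have : {ω | (fun k => reg m M (V k ω)) = ρ} = ⋂ k, (V k)⁻¹' {x : ℝ | reg m M x = ρ k} := by
      ext ω; simp only [mem_setOf_eq, funext_iff, mem_iInter, mem_preimage]
    rw [this]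
    exact MeasurableSet.iInter fun k => (hVm k) (regSet_measurable m M (ρ k))

lemma prod_sing (m M : ℝ) (v : Fin 3) (i : Fin 7) :
    ∏ k, lenR m M (sing v i k) = lenR m M v * m ^ 6 := by
  rw [← Finset.mul_prod_erase _ _ (Finset.mem_univ i)]
  have h1 : sing v i i = v := by simp [sing]
  have h2 : ∀ k ∈ Finset.univ.erase i, lenR m M (sing v i k) = m := by
    intro k hk
    have : sing v i k = 0 := by
      simp [sing, Function.update_of_ne (Finset.mem_erase.1 hk).1]
    rw [this]; simp [lenR]
  rw [h1, Finset.prod_congr rfl h2, Finset.prod_const, Finset.card_erase_of_mem (Finset.mem_univ i)]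
  simp

lemma limc (C d : ℝ) : Tendsto (fun n : ℕ => C * (1 - d / n) ^ 6) atTop (𝓝 C) := by
  have h : Tendsto (fun n : ℕ => (1 : ℝ) - d / n) atTop (𝓝 1) := by
    simpa using tendsto_const_nhds.sub (tendsto_const_div_atTop_nhds_zero_nat d)
  have h6 : Tendsto (fun n : ℕ => ((1:ℝ) - d / n) ^ 6) atTop (𝓝 (1 ^ 6)) := h.pow 6
  simpa using h6.const_mul C

lemma caseLemma {Ω : Type*} [MeasurableSpace Ω] (P : Measure Ω) [IsProbabilityMeasure P]
    (Y : ℤ → Ω → ℝ) (hYm : ∀ i, Measurable (Y i))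
    (hIndep : iIndepFun Y P)
    (hUnif : ∀ i, Measure.map (Y i) P = volume.restrict (Icc (0:ℝ) 1))
    (τa τb : ℝ) (hτa : 0 < τa) (hτb : 0 < τb) (hab : τa ≤ τb)
    (ms Ms : ℕ → ℝ) (hms : ∀ n : ℕ, ms n = 1 - τb / n) (hMs : ∀ n : ℕ, Ms n = 1 - τa / n)
    (E : ℕ → Set Ω) (q : (Fin 7 → Fin 3) → Bool)
    (hE : ∀ n : ℕ, 0 ≤ ms n → ms n ≤ Ms n → Ms n ≤ 1 →
      E n = {ω | q (fun k => reg (ms n) (Ms n) (Y (emb k) ω)) = true})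
    (k₁ k₂ : ℕ)
    (hexpl : ∀ m M : ℝ, ∑ ρ ∈ Finset.univ.filter (fun ρ => (q ρ && small ρ) = true),
        ∏ k, lenR m M (ρ k) = ((k₁:ℝ) * (M - m) + (k₂:ℝ) * (1 - M)) * m ^ 6) :
    Tendsto (fun n : ℕ => (n:ℝ) * (P (E n)).toReal) atTop
      (𝓝 ((k₁:ℝ) * (τb - τa) + (k₂:ℝ) * τa)) := by
  classical
  have hev : ∀ᶠ n : ℕ in atTop, 1 ≤ n ∧ 0 ≤ ms n ∧ ms n ≤ Ms n ∧ Ms n ≤ 1 := by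
    have h1 : ∀ᶠ n : ℕ in atTop, (τb:ℝ) ≤ n :=
      tendsto_natCast_atTop_atTop.eventually_ge_atTop τb
    filter_upwards [eventually_ge_atTop 1, h1] with n hn1 hnb
    have hn0 : (0:ℝ) < n := by exact_mod_cast hn1
    refine ⟨hn1, ?_, ?_, ?_⟩
    · rw [hms]; have : τb / n ≤ 1 := (div_le_one hn0).2 hnb; linarith
    · rw [hms, hMs]; have : τa / n ≤ τb / n := by gcongr
      linarith
    · rw [hMs]; have : 0 ≤ τa / n := by positivity
      linarith
  set w : ℕ → (Fin 7 → Fin 3) → ℝ := fun n ρ => ∏ k, lenR (ms n) (Ms n) (ρ k) with hw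
  set S : ℕ → ℝ := fun n => ∑ ρ ∈ Finset.univ.filter (fun ρ => q ρ = true), w n ρ with hS
  set Sm : ℕ → ℝ := fun n =>
    ∑ ρ ∈ (Finset.univ.filter (fun ρ => q ρ = true)).filter (fun ρ => small ρ = true), w n ρ
    with hSm
  set Bg : ℕ → ℝ := fun n =>
    ∑ ρ ∈ (Finset.univ.filter (fun ρ => q ρ = true)).filter (fun ρ => ¬ small ρ = true), w n ρ
    with hBg
  have hsplit : ∀ n, S n = Sm n + Bg n := by
    intro n
    rw [hS, hSm, hBg]
    exact (Finset.sum_filter_add_sum_filter_not _ _ _).symm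
  have hfilter : (Finset.univ.filter (fun ρ => q ρ = true)).filter (fun ρ => small ρ = true)
      = Finset.univ.filter (fun ρ : Fin 7 → Fin 3 => (q ρ && small ρ) = true) := by
    rw [Finset.filter_filter]
    exact Finset.filter_congr (fun x _ => by simp [Bool.and_eq_true])
  have hSmEq : ∀ n, Sm n = ((k₁:ℝ) * (Ms n - ms n) + (k₂:ℝ) * (1 - Ms n)) * (ms n) ^ 6 := by
    intro n
    rw [hSm, hfilter]
    exact hexpl _ _
  have hSmLim : Tendsto (fun n : ℕ => (n:ℝ) * Sm n) atTop
      (𝓝 ((k₁:ℝ) * (τb - τa) + (k₂:ℝ) * τa)) := by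
    refine (limc ((k₁:ℝ) * (τb - τa) + (k₂:ℝ) * τa) τb).congr' ?_
    filter_upwards [hev] with n ⟨hn1, _, _, _⟩
    have hn0 : (n:ℝ) ≠ 0 := by
      have : (0:ℝ) < n := by exact_mod_cast hn1
      exact this.ne'
    rw [hSmEq n, hms, hMs]
    field_simp
    ring
  have hBgLim : Tendsto (fun n : ℕ => (n:ℝ) * Bg n) atTop (𝓝 0) := by
    apply squeeze_zero' (g := fun n : ℕ => 2187 * τb ^ 2 / n)
    · filter_upwards [hev] with n ⟨hn1, h0, hmM, hM1⟩
      have : 0 ≤ Bg n := by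
        apply Finset.sum_nonneg
        intro ρ _
        exact Finset.prod_nonneg fun k _ => lenR_nonneg _ _ h0 hmM hM1 _
      positivity
    · filter_upwards [hev] with n ⟨hn1, h0, hmM, hM1⟩
      have hn0 : (0:ℝ) < n := by exact_mod_cast hn1
      have hlen : ∀ v : Fin 3, v ≠ 0 → lenR (ms n) (Ms n) v ≤ τb / n := by
        intro v hv
        have e1 : Ms n - ms n = (τb - τa) / n := by rw [hms, hMs]; ring
        have e2 : 1 - Ms n = τa / n := by rw [hMs]; ring
        refine le_trans (lenR_le_max _ _ v hv) ?_
        rw [e1, e2]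
        apply max_le
        · gcongr; linarith
        · gcongr
      have hbound : Bg n ≤ 2187 * (τb / n) ^ 2 := by
        have hterm : ∀ ρ ∈ (Finset.univ.filter (fun ρ => q ρ = true)).filter
            (fun ρ => ¬ small ρ = true), w n ρ ≤ (τb / n) ^ 2 := by
          intro ρ hρ
          have hsmall : ¬ ((Finset.univ.filter (fun k => ρ k ≠ 0)).card ≤ 1) := by
            have := (Finset.mem_filter.1 hρ).2
            simpa [small] using this
          obtain ⟨i, hi, j, hj, hij⟩ := Finset.one_lt_card.mp (not_le.mp hsmall)
          have hρi : ρ i ≠ 0 := (Finset.mem_filter.1 hi).2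
          have hρj : ρ j ≠ 0 := (Finset.mem_filter.1 hj).2
          have hji : j ∈ Finset.univ.erase i := Finset.mem_erase.2 ⟨hij.symm, Finset.mem_univ j⟩
          have e1 : w n ρ = lenR (ms n) (Ms n) (ρ i) *
              (lenR (ms n) (Ms n) (ρ j) * ∏ k ∈ (Finset.univ.erase i).erase j,
                lenR (ms n) (Ms n) (ρ k)) := by
            simp only [hw]
            rw [← Finset.mul_prod_erase _ _ (Finset.mem_univ i),
              ← Finset.mul_prod_erase _ _ hji]
          have h2 : ∏ k ∈ (Finset.univ.erase i).erase j, lenR (ms n) (Ms n) (ρ k) ≤ 1 :=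
            Finset.prod_le_one (fun k _ => lenR_nonneg _ _ h0 hmM hM1 _)
              (fun k _ => lenR_le_one _ _ h0 hmM hM1 _)
          have h3 : 0 ≤ ∏ k ∈ (Finset.univ.erase i).erase j, lenR (ms n) (Ms n) (ρ k) :=
            Finset.prod_nonneg fun k _ => lenR_nonneg _ _ h0 hmM hM1 _
          have hτn : 0 ≤ τb / n := by positivity
          calc w n ρ = _ := e1
            _ ≤ (τb / n) * ((τb / n) * 1) := by
                apply mul_le_mul (hlen _ hρi) _ _ hτn
                · apply mul_le_mul (hlen _ hρj) h2 h3 hτn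
                · apply mul_nonneg (lenR_nonneg _ _ h0 hmM hM1 _) h3
            _ = (τb / n) ^ 2 := by ring
        calc Bg n ≤ ((Finset.univ.filter (fun ρ => q ρ = true)).filter
              (fun ρ => ¬ small ρ = true)).card • ((τb / n) ^ 2) :=
            Finset.sum_le_card_nsmul _ _ _ hterm
          _ ≤ 2187 * (τb / n) ^ 2 := by
            rw [nsmul_eq_mul]
            apply mul_le_mul_of_nonneg_right _ (sq_nonneg _)
            have hcard := Finset.card_le_univ ((Finset.univ.filter (fun ρ => q ρ = true)).filter
              (fun ρ => ¬ small ρ = true))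
            have : Fintype.card (Fin 7 → Fin 3) = 2187 := by
              simp [Fintype.card_fun]
            rw [this] at hcard
            exact_mod_cast hcard
      calc (n:ℝ) * Bg n ≤ (n:ℝ) * (2187 * (τb / n) ^ 2) := by
            apply mul_le_mul_of_nonneg_left hbound hn0.le
        _ = 2187 * τb ^ 2 / n := by field_simp
    · exact tendsto_const_div_atTop_nhds_zero_nat _
  have hSLim : Tendsto (fun n : ℕ => (n:ℝ) * S n) atTop
      (𝓝 ((k₁:ℝ) * (τb - τa) + (k₂:ℝ) * τa)) := by
    have := hSmLim.add hBgLim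
    rw [add_zero] at this
    refine this.congr ?_
    intro n
    rw [hsplit n]
    ring
  refine hSLim.congr' ?_
  filter_upwards [hev] with n ⟨hn1, h0, hmM, hM1⟩
  congr 1
  exact (core P (fun k => Y (emb k)) (fun k => hYm _)
    (fun Ss hSs => hProd_of_indep P Y hIndep Ss hSs) (fun k => hUnif _)
    (ms n) (Ms n) h0 hmM hM1 (E n) q (hE n h0 hmM hM1)).symm

lemma lenR_zero (m M : ℝ) : lenR m M 0 = m := by simp [lenR]
lemma lenR_one (m M : ℝ) : lenR m M 1 = M - m := by simp [lenR]
lemma lenR_two (m M : ℝ) : lenR m M 2 = 1 - M := by simp [lenR]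

set_option maxRecDepth 100000 in
lemma fsetB1 : Finset.univ.filter (fun ρ : Fin 7 → Fin 3 => (bB hi lo ρ && small ρ) = true)
    = {sing 1 4, sing 2 2} := by decide

set_option maxRecDepth 100000 in
lemma fsetA1 : Finset.univ.filter (fun ρ : Fin 7 → Fin 3 => (bA1 hi lo ρ && small ρ) = true)
    = {sing 1 4, sing 2 4, sing 2 2} := by decide

set_option maxRecDepth 100000 in
lemma fsetB2 : Finset.univ.filter (fun ρ : Fin 7 → Fin 3 => (bB lo hi ρ && small ρ) = true)
    = {sing 1 2, sing 2 2} := by decide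

set_option maxRecDepth 100000 in
lemma fsetA2 : Finset.univ.filter (fun ρ : Fin 7 → Fin 3 => (bA1 lo hi ρ && small ρ) = true)
    = {sing 1 2, sing 2 2, sing 1 4, sing 2 4} := by decide

lemma hexplB1 (m M : ℝ) :
    ∑ ρ ∈ Finset.univ.filter (fun ρ : Fin 7 → Fin 3 => (bB hi lo ρ && small ρ) = true),
      ∏ k, lenR m M (ρ k) = (((1:ℕ):ℝ) * (M - m) + ((1:ℕ):ℝ) * (1 - M)) * m ^ 6 := by
  rw [fsetB1, Finset.sum_pair (by decide), prod_sing, prod_sing, lenR_one, lenR_two]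
  push_cast; ring

lemma hexplA1 (m M : ℝ) :
    ∑ ρ ∈ Finset.univ.filter (fun ρ : Fin 7 → Fin 3 => (bA1 hi lo ρ && small ρ) = true),
      ∏ k, lenR m M (ρ k) = (((1:ℕ):ℝ) * (M - m) + ((2:ℕ):ℝ) * (1 - M)) * m ^ 6 := by
  rw [fsetA1, Finset.sum_insert (by decide), Finset.sum_pair (by decide),
    prod_sing, prod_sing, prod_sing, lenR_one, lenR_two]
  push_cast; ring

lemma hexplB2 (m M : ℝ) :
    ∑ ρ ∈ Finset.univ.filter (fun ρ : Fin 7 → Fin 3 => (bB lo hi ρ && small ρ) = true),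
      ∏ k, lenR m M (ρ k) = (((1:ℕ):ℝ) * (M - m) + ((1:ℕ):ℝ) * (1 - M)) * m ^ 6 := by
  rw [fsetB2, Finset.sum_pair (by decide), prod_sing, prod_sing, lenR_one, lenR_two]
  push_cast; ring

lemma hexplA2 (m M : ℝ) :
    ∑ ρ ∈ Finset.univ.filter (fun ρ : Fin 7 → Fin 3 => (bA1 lo hi ρ && small ρ) = true),
      ∏ k, lenR m M (ρ k) = (((2:ℕ):ℝ) * (M - m) + ((2:ℕ):ℝ) * (1 - M)) * m ^ 6 := by
  rw [fsetA2, Finset.sum_insert (by decide), Finset.sum_insert (by decide),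
    Finset.sum_pair (by decide), prod_sing, prod_sing, prod_sing, prod_sing, lenR_one, lenR_two]
  push_cast; ring

section EventEq
variable {Ω : Type*} [MeasurableSpace Ω]
  (Y : ℤ → Ω → ℝ)
  (Z₁ Z₂ : ℕ → Ω → ℝ)
  (u₁ u₂ : ℕ → ℝ)
  (A : ℕ → ℕ → Set Ω)

lemma hEB1 (hZ₁ : ∀ i : ℕ, Z₁ i = fun ω => max (Y i ω) (max (Y ((i:ℤ) - 2) ω) (Y ((i:ℤ) - 3) ω)))
    (hZ₂ : ∀ i : ℕ, Z₂ i = fun ω => Y i ω)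
    (hA : ∀ i n, A i n =
      {ω | (Z₁ i ω ≤ u₁ n ∧ u₁ n < Z₁ (i + 1) ω) ∨ (Z₂ i ω ≤ u₂ n ∧ u₂ n < Z₂ (i + 1) ω)})
    (n : ℕ) (hmM : u₂ n ≤ u₁ n) :
    A 1 n ∩ (A 2 n)ᶜ ∩ (A 3 n)ᶜ
      = {ω | bB hi lo (fun k => reg (u₂ n) (u₁ n) (Y (emb k) ω)) = true} := by
  ext ω
  simp only [hA, hZ₁, hZ₂, mem_inter_iff, mem_compl_iff, mem_setOf_eq, max_le_iff, lt_max_iff]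
  norm_num
  simp only [le_M_iff hmM, lt_M_iff hmM, le_m_iff hmM, lt_m_iff hmM]
  simp only [bB, Bool.and_eq_true]
  refine and_congr (and_congr ?_ ?_) ?_ <;>
    simp only [bA1, bA2, bA3, Bool.and_eq_true, Bool.or_eq_true, Bool.not_eq_true',
      Bool.and_eq_false_eq_eq_false_or_eq_false, Bool.or_eq_false_eq_eq_false_and_eq_false,
      Bool.not_eq_false_eq_eq_true,
      show emb 0 = -2 from rfl, show emb 1 = -1 from rfl,
      show emb 2 = 0 from rfl, show emb 3 = 1 from rfl, show emb 4 = 2 from rfl,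
      show emb 5 = 3 from rfl, show emb 6 = 4 from rfl] <;>
    simp only [← Bool.eq_false_eq_not_eq_true] <;>
    tauto

lemma hEA1 (hZ₁ : ∀ i : ℕ, Z₁ i = fun ω => max (Y i ω) (max (Y ((i:ℤ) - 2) ω) (Y ((i:ℤ) - 3) ω)))
    (hZ₂ : ∀ i : ℕ, Z₂ i = fun ω => Y i ω)
    (hA : ∀ i n, A i n =
      {ω | (Z₁ i ω ≤ u₁ n ∧ u₁ n < Z₁ (i + 1) ω) ∨ (Z₂ i ω ≤ u₂ n ∧ u₂ n < Z₂ (i + 1) ω)})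
    (n : ℕ) (hmM : u₂ n ≤ u₁ n) :
    A 1 n = {ω | bA1 hi lo (fun k => reg (u₂ n) (u₁ n) (Y (emb k) ω)) = true} := by
  ext ω
  simp only [hA, hZ₁, hZ₂, mem_setOf_eq, max_le_iff, lt_max_iff]
  norm_num
  simp only [le_M_iff hmM, lt_M_iff hmM, le_m_iff hmM, lt_m_iff hmM]
  simp only [bA1, Bool.and_eq_true, Bool.or_eq_true, Bool.not_eq_true',
    Bool.and_eq_false_eq_eq_false_or_eq_false, Bool.or_eq_false_eq_eq_false_and_eq_false,
    Bool.not_eq_false_eq_eq_true,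
    show emb 0 = -2 from rfl, show emb 1 = -1 from rfl,
    show emb 2 = 0 from rfl, show emb 3 = 1 from rfl, show emb 4 = 2 from rfl,
    show emb 5 = 3 from rfl, show emb 6 = 4 from rfl]
  simp only [← Bool.eq_false_eq_not_eq_true]
  tauto

lemma hEB2 (hZ₁ : ∀ i : ℕ, Z₁ i = fun ω => max (Y i ω) (max (Y ((i:ℤ) - 2) ω) (Y ((i:ℤ) - 3) ω)))
    (hZ₂ : ∀ i : ℕ, Z₂ i = fun ω => Y i ω)
    (hA : ∀ i n, A i n =
      {ω | (Z₁ i ω ≤ u₁ n ∧ u₁ n < Z₁ (i + 1) ω) ∨ (Z₂ i ω ≤ u₂ n ∧ u₂ n < Z₂ (i + 1) ω)})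
    (n : ℕ) (hmM : u₁ n ≤ u₂ n) :
    A 1 n ∩ (A 2 n)ᶜ ∩ (A 3 n)ᶜ
      = {ω | bB lo hi (fun k => reg (u₁ n) (u₂ n) (Y (emb k) ω)) = true} := by
  ext ω
  simp only [hA, hZ₁, hZ₂, mem_inter_iff, mem_compl_iff, mem_setOf_eq, max_le_iff, lt_max_iff]
  norm_num
  simp only [le_M_iff hmM, lt_M_iff hmM, le_m_iff hmM, lt_m_iff hmM]
  simp only [bB, Bool.and_eq_true]
  refine and_congr (and_congr ?_ ?_) ?_ <;>
    simp only [bA1, bA2, bA3, Bool.and_eq_true, Bool.or_eq_true, Bool.not_eq_true',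
      Bool.and_eq_false_eq_eq_false_or_eq_false, Bool.or_eq_false_eq_eq_false_and_eq_false,
      Bool.not_eq_false_eq_eq_true,
      show emb 0 = -2 from rfl, show emb 1 = -1 from rfl,
      show emb 2 = 0 from rfl, show emb 3 = 1 from rfl, show emb 4 = 2 from rfl,
      show emb 5 = 3 from rfl, show emb 6 = 4 from rfl] <;>
    simp only [← Bool.eq_false_eq_not_eq_true] <;>
    tauto

lemma hEA2 (hZ₁ : ∀ i : ℕ, Z₁ i = fun ω => max (Y i ω) (max (Y ((i:ℤ) - 2) ω) (Y ((i:ℤ) - 3) ω)))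
    (hZ₂ : ∀ i : ℕ, Z₂ i = fun ω => Y i ω)
    (hA : ∀ i n, A i n =
      {ω | (Z₁ i ω ≤ u₁ n ∧ u₁ n < Z₁ (i + 1) ω) ∨ (Z₂ i ω ≤ u₂ n ∧ u₂ n < Z₂ (i + 1) ω)})
    (n : ℕ) (hmM : u₁ n ≤ u₂ n) :
    A 1 n = {ω | bA1 lo hi (fun k => reg (u₁ n) (u₂ n) (Y (emb k) ω)) = true} := by
  ext ω
  simp only [hA, hZ₁, hZ₂, mem_setOf_eq, max_le_iff, lt_max_iff]
  norm_num
  simp only [le_M_iff hmM, lt_M_iff hmM, le_m_iff hmM, lt_m_iff hmM]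
  simp only [bA1, Bool.and_eq_true, Bool.or_eq_true, Bool.not_eq_true',
    Bool.and_eq_false_eq_eq_false_or_eq_false, Bool.or_eq_false_eq_eq_false_and_eq_false,
    Bool.not_eq_false_eq_eq_true,
    show emb 0 = -2 from rfl, show emb 1 = -1 from rfl,
    show emb 2 = 0 from rfl, show emb 3 = 1 from rfl, show emb 4 = 2 from rfl,
    show emb 5 = 3 from rfl, show emb 6 = 4 from rfl]
  simp only [← Bool.eq_false_eq_not_eq_true]
  tauto

end EventEq

theorem stmt18
    {Ω : Type*} [MeasurableSpace Ω] (P : Measure Ω) [IsProbabilityMeasure P]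
    (Y : ℤ → Ω → ℝ) (hYm : ∀ i, Measurable (Y i))
    (hIndep : iIndepFun Y P)
    (hUnif : ∀ i, Measure.map (Y i) P = volume.restrict (Icc (0:ℝ) 1))
    (τ'₁ τ'₂ : ℝ) (hτ₁ : 0 < τ'₁) (hτ₂ : 0 < τ'₂)
    (Z₁ Z₂ : ℕ → Ω → ℝ)
    (hZ₁ : ∀ i : ℕ, Z₁ i = fun ω => max (Y i ω) (max (Y ((i:ℤ) - 2) ω) (Y ((i:ℤ) - 3) ω)))
    (hZ₂ : ∀ i : ℕ, Z₂ i = fun ω => Y i ω)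
    (u₁ u₂ : ℕ → ℝ) (hu₁ : ∀ n : ℕ, u₁ n = 1 - τ'₁ / n) (hu₂ : ∀ n : ℕ, u₂ n = 1 - τ'₂ / n)
    (A : ℕ → ℕ → Set Ω)
    (hA : ∀ i n, A i n =
      {ω | (Z₁ i ω ≤ u₁ n ∧ u₁ n < Z₁ (i + 1) ω) ∨ (Z₂ i ω ≤ u₂ n ∧ u₂ n < Z₂ (i + 1) ω)}) :
    Tendsto (fun n : ℕ => (n : ℝ) * (P (A 1 n ∩ (A 2 n)ᶜ ∩ (A 3 n)ᶜ)).toReal)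
        atTop (nhds (if τ'₁ ≤ τ'₂ then τ'₂ else τ'₁))
    ∧ Tendsto (fun n : ℕ =>
          (P (A 1 n ∩ (A 2 n)ᶜ ∩ (A 3 n)ᶜ)).toReal / (P (A 1 n)).toReal)
        atTop (nhds (if τ'₁ ≤ τ'₂ then τ'₂ / (τ'₁ + τ'₂) else 1 / 2)) := by
  rcases le_or_gt τ'₁ τ'₂ with hc | hc
  · -- case τ'₁ ≤ τ'₂ : m = u₂, M = u₁
    have hord : ∀ n : ℕ, u₂ n ≤ u₁ n := by
      intro n
      rw [hu₁, hu₂]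
      have : τ'₁ / n ≤ τ'₂ / n := by
        rcases Nat.eq_zero_or_pos n with h | h
        · simp [h]
        · have : (0:ℝ) < n := by exact_mod_cast h
          gcongr
      linarith
    have hB := caseLemma P Y hYm hIndep hUnif τ'₁ τ'₂ hτ₁ hτ₂ hc u₂ u₁ hu₂ hu₁
      (fun n => A 1 n ∩ (A 2 n)ᶜ ∩ (A 3 n)ᶜ) (bB hi lo)
      (fun n _ _ _ => hEB1 Y Z₁ Z₂ u₁ u₂ A hZ₁ hZ₂ hA n (hord n)) 1 1 hexplB1
    have hA1 := caseLemma P Y hYm hIndep hUnif τ'₁ τ'₂ hτ₁ hτ₂ hc u₂ u₁ hu₂ hu₁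
      (fun n => A 1 n) (bA1 hi lo)
      (fun n _ _ _ => hEA1 Y Z₁ Z₂ u₁ u₂ A hZ₁ hZ₂ hA n (hord n)) 1 2 hexplA1
    rw [show (((1:ℕ):ℝ) * (τ'₂ - τ'₁) + ((1:ℕ):ℝ) * τ'₁) = τ'₂ by push_cast; ring] at hB
    rw [show (((1:ℕ):ℝ) * (τ'₂ - τ'₁) + ((2:ℕ):ℝ) * τ'₁) = τ'₁ + τ'₂ by push_cast; ring] at hA1
    rw [if_pos hc, if_pos hc]
    refine ⟨hB, ?_⟩
    have hne : τ'₁ + τ'₂ ≠ 0 := by positivity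
    refine (hB.div hA1 hne).congr' ?_
    filter_upwards [eventually_ge_atTop 1] with n hn
    have hn0 : (n:ℝ) ≠ 0 := by
      have : (0:ℝ) < n := by exact_mod_cast hn
      exact this.ne'
    simp only [Pi.div_apply]
    rw [mul_div_mul_left _ _ hn0]
  · -- case τ'₂ < τ'₁ : m = u₁, M = u₂
    have hord : ∀ n : ℕ, u₁ n ≤ u₂ n := by
      intro n
      rw [hu₁, hu₂]
      have : τ'₂ / n ≤ τ'₁ / n := by
        rcases Nat.eq_zero_or_pos n with h | h
        · simp [h]
        · have : (0:ℝ) < n := by exact_mod_cast h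
          gcongr
      linarith
    have hB := caseLemma P Y hYm hIndep hUnif τ'₂ τ'₁ hτ₂ hτ₁ hc.le u₁ u₂ hu₁ hu₂
      (fun n => A 1 n ∩ (A 2 n)ᶜ ∩ (A 3 n)ᶜ) (bB lo hi)
      (fun n _ _ _ => hEB2 Y Z₁ Z₂ u₁ u₂ A hZ₁ hZ₂ hA n (hord n)) 1 1 hexplB2
    have hA1 := caseLemma P Y hYm hIndep hUnif τ'₂ τ'₁ hτ₂ hτ₁ hc.le u₁ u₂ hu₁ hu₂
      (fun n => A 1 n) (bA1 lo hi)
      (fun n _ _ _ => hEA2 Y Z₁ Z₂ u₁ u₂ A hZ₁ hZ₂ hA n (hord n)) 2 2 hexplA2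
    rw [show (((1:ℕ):ℝ) * (τ'₁ - τ'₂) + ((1:ℕ):ℝ) * τ'₂) = τ'₁ by push_cast; ring] at hB
    rw [show (((2:ℕ):ℝ) * (τ'₁ - τ'₂) + ((2:ℕ):ℝ) * τ'₂) = 2 * τ'₁ by push_cast; ring] at hA1
    rw [if_neg (not_le.2 hc), if_neg (not_le.2 hc)]
    refine ⟨hB, ?_⟩
    have hne : 2 * τ'₁ ≠ 0 := by positivity
    have hval : τ'₁ / (2 * τ'₁) = 1 / 2 := by
      rw [div_eq_div_iff hne (by norm_num : (2:ℝ) ≠ 0)]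
      ring
    rw [← hval]
    refine (hB.div hA1 hne).congr' ?_
    filter_upwards [eventually_ge_atTop 1] with n hn
    have hn0 : (n:ℝ) ≠ 0 := by
      have : (0:ℝ) < n := by exact_mod_cast hn
      exact this.ne'
    simp only [Pi.div_apply]
    rw [mul_div_mul_left _ _ hn0]
end
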